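/- arXiv:2205.13825 — 2 statements merged into one kernel-verified Lean document; each statement's English description precedes it below -/
import Mathlib

section
/- Let H be the subgroup of U₄(ℤ/3) consisting of all matrices N(a,u,v,w) with rows (1,a,u,v), (0,1,a,w), (0,0,1,a), (0,0,0,1). Then H is a subgroup of U₄(ℤ/3), its center consists of all N(a,u,v,w) with a = 0 and u = w, and its commutator subgroup consists of all N(0,0,v,0) with v ∈ ℤ/3. -/
/-- The upper unitriangular 4×4 matrix `M(a₁,a₂,a₃,u,v,w)` over `ℤ/ℓ`. -/
def M4 {ℓ : ℕ} (a₁ a₂ a₃ u v w : ZMod ℓ) : Matrix (Fin 4) (Fin 4) (ZMod ℓ) :=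
  !![1, a₁, u, v; 0, 1, a₂, w; 0, 0, 1, a₃; 0, 0, 0, 1]

theorem M4_mul {ℓ : ℕ} (a₁ a₂ a₃ u v w b₁ b₂ b₃ x y z : ZMod ℓ) :
    M4 a₁ a₂ a₃ u v w * M4 b₁ b₂ b₃ x y z =
      M4 (a₁ + b₁) (a₂ + b₂) (a₃ + b₃) (u + a₁ * b₂ + x)
        (v + a₁ * z + u * b₃ + y) (w + a₂ * b₃ + z) := by
  ext i j
  fin_cases i <;> fin_cases j <;>
    simp [M4, Matrix.mul_apply, Fin.sum_univ_four, Matrix.vecHead, Matrix.vecTail] <;> ring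

theorem M4_one {ℓ : ℕ} : (M4 0 0 0 0 0 0 : Matrix (Fin 4) (Fin 4) (ZMod ℓ)) = 1 := by
  ext i j
  fin_cases i <;> fin_cases j <;> simp [M4, Matrix.one_apply, Matrix.vecHead, Matrix.vecTail]

/-- `U₄(ℤ/ℓ)` as a subgroup of the units of the matrix ring. -/
def U4 (ℓ : ℕ) : Subgroup (Matrix (Fin 4) (Fin 4) (ZMod ℓ))ˣ where
  carrier := {A | ∃ a₁ a₂ a₃ u v w : ZMod ℓ, (A : Matrix (Fin 4) (Fin 4) (ZMod ℓ)) = M4 a₁ a₂ a₃ u v w}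
  one_mem' := ⟨0, 0, 0, 0, 0, 0, by rw [Units.val_one, M4_one]⟩
  mul_mem' := by
    rintro A B ⟨a₁, a₂, a₃, u, v, w, hA⟩ ⟨b₁, b₂, b₃, x, y, z, hB⟩
    exact ⟨a₁ + b₁, a₂ + b₂, a₃ + b₃, u + a₁ * b₂ + x, v + a₁ * z + u * b₃ + y,
      w + a₂ * b₃ + z, by rw [Units.val_mul, hA, hB, M4_mul]⟩
  inv_mem' := by
    rintro A ⟨a₁, a₂, a₃, u, v, w, hA⟩
    refine ⟨-a₁, -a₂, -a₃, a₁ * a₂ - u, -v + a₁ * w + u * a₃ - a₁ * a₂ * a₃, a₂ * a₃ - w, ?_⟩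
    have hB : (A : Matrix (Fin 4) (Fin 4) (ZMod ℓ)) *
        M4 (-a₁) (-a₂) (-a₃) (a₁ * a₂ - u) (-v + a₁ * w + u * a₃ - a₁ * a₂ * a₃) (a₂ * a₃ - w)
          = 1 := by
      rw [hA, M4_mul]
      have : M4 (a₁ + -a₁) (a₂ + -a₂) (a₃ + -a₃) (u + a₁ * -a₂ + (a₁ * a₂ - u))
          (v + a₁ * (a₂ * a₃ - w) + u * -a₃ + (-v + a₁ * w + u * a₃ - a₁ * a₂ * a₃))
          (w + a₂ * -a₃ + (a₂ * a₃ - w)) = M4 0 0 0 0 0 0 (ℓ := ℓ) := by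
        congr 1 <;> ring
      rw [this, M4_one]
    calc (↑A⁻¹ : Matrix (Fin 4) (Fin 4) (ZMod ℓ))
        = ↑A⁻¹ * ((↑A : Matrix (Fin 4) (Fin 4) (ZMod ℓ)) *
            M4 (-a₁) (-a₂) (-a₃) (a₁ * a₂ - u)
              (-v + a₁ * w + u * a₃ - a₁ * a₂ * a₃) (a₂ * a₃ - w)) := by rw [hB, mul_one]
      _ = ((↑A⁻¹ : Matrix (Fin 4) (Fin 4) (ZMod ℓ)) * ↑A) *
            M4 (-a₁) (-a₂) (-a₃) (a₁ * a₂ - u)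
              (-v + a₁ * w + u * a₃ - a₁ * a₂ * a₃) (a₂ * a₃ - w) := by rw [← mul_assoc]
      _ = M4 (-a₁) (-a₂) (-a₃) (a₁ * a₂ - u)
              (-v + a₁ * w + u * a₃ - a₁ * a₂ * a₃) (a₂ * a₃ - w) := by
            rw [Units.inv_mul, one_mul]

/-- The matrix `N(a,u,v,w)` over `ℤ/3`, with rows
`(1,a,u,v)`, `(0,1,a,w)`, `(0,0,1,a)`, `(0,0,0,1)`. -/
def N4 (a u v w : ZMod 3) : Matrix (Fin 4) (Fin 4) (ZMod 3) :=
  M4 a a a u v w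

/-- The subgroup `H` of `U₄(ℤ/3)` of all matrices `N(a,u,v,w)`. -/
def HU : Subgroup (Matrix (Fin 4) (Fin 4) (ZMod 3))ˣ where
  carrier := {A | ∃ a u v w : ZMod 3, (A : Matrix (Fin 4) (Fin 4) (ZMod 3)) = N4 a u v w}
  one_mem' := ⟨0, 0, 0, 0, by rw [Units.val_one]; exact M4_one.symm⟩
  mul_mem' := by
    rintro A B ⟨a, u, v, w, hA⟩ ⟨b, x, y, z, hB⟩
    exact ⟨a + b, u + a * b + x, v + a * z + u * b + y, w + a * b + z,
      by rw [Units.val_mul, hA, hB, N4, N4, M4_mul]; rfl⟩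
  inv_mem' := by
    rintro A ⟨a, u, v, w, hA⟩
    refine ⟨-a, a * a - u, -v + a * w + u * a - a * a * a, a * a - w, ?_⟩
    have hB : (A : Matrix (Fin 4) (Fin 4) (ZMod 3)) *
        N4 (-a) (a * a - u) (-v + a * w + u * a - a * a * a) (a * a - w) = 1 := by
      rw [hA, N4, N4, M4_mul]
      have : M4 (a + -a) (a + -a) (a + -a) (u + a * -a + (a * a - u))
          (v + a * (a * a - w) + u * -a + (-v + a * w + u * a - a * a * a))
          (w + a * -a + (a * a - w)) = M4 0 0 0 0 0 0 (ℓ := 3) := by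
        congr 1 <;> ring
      rw [this, M4_one]
    calc (↑A⁻¹ : Matrix (Fin 4) (Fin 4) (ZMod 3))
        = ↑A⁻¹ * ((↑A : Matrix (Fin 4) (Fin 4) (ZMod 3)) *
            N4 (-a) (a * a - u) (-v + a * w + u * a - a * a * a) (a * a - w)) := by
          rw [hB, mul_one]
      _ = ((↑A⁻¹ : Matrix (Fin 4) (Fin 4) (ZMod 3)) * ↑A) *
            N4 (-a) (a * a - u) (-v + a * w + u * a - a * a * a) (a * a - w) := by
          rw [← mul_assoc]
      _ = N4 (-a) (a * a - u) (-v + a * w + u * a - a * a * a) (a * a - w) := by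
          rw [Units.inv_mul, one_mul]

/-!
Every element of `H` is `N(a,u,v,w)`, and in these coordinates the product is
`N(a,u,v,w) N(b,x,y,z) = N(a+b, u+ab+x, v+az+ub+y, w+ab+z)`. Comparing the two products
shows that `N(a,u,v,w)` commutes with `N(b,x,y,z)` iff `az + ub = bw + xa`; testing against
`N(1,0,0,0)` and `N(0,0,0,1)` gives `u = w` and `a = 0`. Their commutator is
`N(0, 0, az + ub - bw - xa, 0)`, so the commutator subgroup lies in the
`v`-axis, and the whole axis is reached as `[N(1,0,0,0), N(0,0,0,v)] = N(0,0,v,0)`.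
-/

open scoped commutatorElement

theorem M4_inj {ℓ : ℕ} {a₁ a₂ a₃ u v w b₁ b₂ b₃ x y z : ZMod ℓ} :
    M4 a₁ a₂ a₃ u v w = M4 b₁ b₂ b₃ x y z ↔
      a₁ = b₁ ∧ a₂ = b₂ ∧ a₃ = b₃ ∧ u = x ∧ v = y ∧ w = z := by
  refine ⟨fun h => ?_, by rintro ⟨rfl, rfl, rfl, rfl, rfl, rfl⟩; rfl⟩
  have entry (i j : Fin 4) := congrFun (congrFun h i) j
  exact ⟨by simpa [M4] using entry 0 1, by simpa [M4] using entry 1 2,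
    by simpa [M4] using entry 2 3, by simpa [M4] using entry 0 2,
    by simpa [M4] using entry 0 3, by simpa [M4] using entry 1 3⟩

theorem N4_mul (a u v w b x y z : ZMod 3) :
    N4 a u v w * N4 b x y z =
      N4 (a + b) (u + a * b + x) (v + a * z + u * b + y) (w + a * b + z) :=
  M4_mul ..

theorem N4_inj {a u v w b x y z : ZMod 3} :
    N4 a u v w = N4 b x y z ↔ a = b ∧ u = x ∧ v = y ∧ w = z := by
  simp only [N4, M4_inj, and_self_left]

theorem N4_mul_N4_inverse (a u v w : ZMod 3) :
    N4 a u v w * N4 (-a) (a * a - u) (a * w + u * a - a * a * a - v) (a * a - w) = 1 := by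
  rw [N4_mul, ← M4_one]
  exact N4_inj.mpr ⟨by ring, by ring, by ring, by ring⟩

def unitOfN4 (a u v w : ZMod 3) : (Matrix (Fin 4) (Fin 4) (ZMod 3))ˣ where
  val := N4 a u v w
  inv := N4 (-a) (a * a - u) (a * w + u * a - a * a * a - v) (a * a - w)
  val_inv := N4_mul_N4_inverse a u v w
  inv_val := mul_eq_one_comm.mp (N4_mul_N4_inverse a u v w)

namespace HU

def mk (a u v w : ZMod 3) : HU := ⟨unitOfN4 a u v w, a, u, v, w, rfl⟩

theorem val_eq_N4_iff {A : HU} {a u v w : ZMod 3} :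
    ((A : (Matrix (Fin 4) (Fin 4) (ZMod 3))ˣ) : Matrix (Fin 4) (Fin 4) (ZMod 3)) =
      N4 a u v w ↔ A = mk a u v w :=
  ⟨fun h => Subtype.ext (Units.ext h), by rintro rfl; rfl⟩

theorem exists_eq_mk (A : HU) : ∃ a u v w, A = mk a u v w := by
  obtain ⟨a, u, v, w, h⟩ := A.2
  exact ⟨a, u, v, w, val_eq_N4_iff.mp h⟩

theorem mk_inj {a u v w b x y z : ZMod 3} :
    mk a u v w = mk b x y z ↔ a = b ∧ u = x ∧ v = y ∧ w = z := by
  rw [← val_eq_N4_iff, ← N4_inj]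
  rfl

theorem mk_zero : mk 0 0 0 0 = 1 :=
  Subtype.ext (Units.ext M4_one)

theorem mk_mul (a u v w b x y z : ZMod 3) :
    mk a u v w * mk b x y z =
      mk (a + b) (u + a * b + x) (v + a * z + u * b + y) (w + a * b + z) :=
  Subtype.ext (Units.ext (N4_mul ..))

theorem mk_inv (a u v w : ZMod 3) :
    (mk a u v w)⁻¹ = mk (-a) (a * a - u) (a * w + u * a - a * a * a - v) (a * a - w) := by
  rw [← val_eq_N4_iff]
  rfl

theorem commutatorElement_mk (a u v w b x y z : ZMod 3) :
    ⁅mk a u v w, mk b x y z⁆ = mk 0 0 (a * z + u * b - b * w - x * a) 0 := by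
  rw [commutatorElement_def, mk_inv, mk_inv, mk_mul, mk_mul, mk_mul, mk_inj]
  exact ⟨by ring, by ring, by ring, by ring⟩

theorem mem_center_iff {A : HU} : A ∈ Subgroup.center HU ↔ ∃ u v, A = mk 0 u v u := by
  rw [Subgroup.mem_center_iff]
  constructor
  · intro h
    obtain ⟨a, u, v, w, rfl⟩ := exists_eq_mk A
    have hx := h (mk 1 0 0 0)
    have hz := h (mk 0 0 0 1)
    rw [mk_mul, mk_mul, mk_inj] at hx hz
    have ha : a = 0 := by linear_combination -hz.2.2.1
    have hw : w = u := by linear_combination hx.2.2.1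
    exact ⟨u, v, by rw [ha, hw]⟩
  · rintro ⟨u, v, rfl⟩ g
    obtain ⟨b, x, y, z, rfl⟩ := exists_eq_mk g
    rw [mk_mul, mk_mul, mk_inj]
    exact ⟨by ring, by ring, by ring, by ring⟩

theorem mem_commutator_iff {A : HU} : A ∈ commutator HU ↔ ∃ v, A = mk 0 0 v 0 := by
  constructor
  · intro hA
    rw [commutator_eq_closure] at hA
    induction hA using Subgroup.closure_induction with
    | mem g hg =>
      obtain ⟨g₁, g₂, rfl⟩ := mem_commutatorSet_iff.mp hg
      obtain ⟨a, u, v, w, rfl⟩ := exists_eq_mk g₁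
      obtain ⟨b, x, y, z, rfl⟩ := exists_eq_mk g₂
      exact ⟨_, commutatorElement_mk ..⟩
    | one => exact ⟨0, mk_zero.symm⟩
    | mul g h _ _ hg hh =>
      obtain ⟨v, rfl⟩ := hg
      obtain ⟨y, rfl⟩ := hh
      exact ⟨v + y, by rw [mk_mul, mk_inj]; exact ⟨by ring, by ring, by ring, by ring⟩⟩
    | inv g _ hg =>
      obtain ⟨v, rfl⟩ := hg
      exact ⟨-v, by rw [mk_inv, mk_inj]; exact ⟨by ring, by ring, by ring, by ring⟩⟩
  · rintro ⟨v, rfl⟩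
    have hv : ⁅mk 1 0 0 0, mk 0 0 0 v⁆ = mk 0 0 v 0 := by
      rw [commutatorElement_mk, mk_inj]
      exact ⟨rfl, rfl, by ring, rfl⟩
    rw [← hv, commutator_eq_closure]
    exact Subgroup.subset_closure (mem_commutatorSet_iff.mpr ⟨_, _, rfl⟩)

end HU

/-- `H` is a subgroup of `U₄(ℤ/3)`; its center consists of the matrices
`N(0,u,v,u)` (i.e. `a = 0` and `u = w`), and its commutator subgroup consists of the
matrices `N(0,0,v,0)` with `v ∈ ℤ/3`. -/
theorem H_center_and_commutator :
    HU ≤ U4 3 ∧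
    (∀ A : HU, A ∈ Subgroup.center HU ↔
      ∃ u v : ZMod 3, ((A : (Matrix (Fin 4) (Fin 4) (ZMod 3))ˣ) :
        Matrix (Fin 4) (Fin 4) (ZMod 3)) = N4 0 u v u) ∧
    (∀ A : HU, A ∈ commutator HU ↔
      ∃ v : ZMod 3, ((A : (Matrix (Fin 4) (Fin 4) (ZMod 3))ˣ) :
        Matrix (Fin 4) (Fin 4) (ZMod 3)) = N4 0 0 v 0) := by
  simp only [HU.val_eq_N4_iff]
  exact ⟨fun _ ⟨a, u, v, w, hA⟩ => ⟨a, a, a, u, v, w, hA⟩,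
    fun _ => HU.mem_center_iff, fun _ => HU.mem_commutator_iff⟩
end

section
/- Let ℓ > 3 be a prime and let G = (ℤ/ℓ)² ⋊ ⟨Φ⟩ where Φ has order ℓ and acts on (ℤ/ℓ)² with basis {m', m} by Φ(m') = m', Φ(m) = m' + m. Define characters χ₁, χ₃: G → ℤ/ℓ vanishing on (ℤ/ℓ)² with χ₁(Φ) = φ₁ ≠ 0 and χ₃(Φ) = φ₃ ≠ 0, and define χ₂: G → ℤ/ℓ by χ₂(m') = χ₂(Φ) = 0, χ₂(m) = 1. Then there is no group homomorphism ρ: G → U₄(ℤ/ℓ) whose three superdiagonal entry functions equal χ₁, χ₂, χ₃ respectively. -/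
/-- let `ℓ > 3` be prime and `G = (ℤ/ℓ)² ⋊ ⟨Φ⟩` where `Φ` of order `ℓ`
acts on the basis `{m', m}` by `Φ(m') = m'` and `Φ(m) = m' + m` (presented abstractly
by generators `m', m, Φ` with these relations and `#G = ℓ³`).  Let `χ₁, χ₃` vanish on
`(ℤ/ℓ)²` with `χ₁(Φ) ≠ 0 ≠ χ₃(Φ)`, and let `χ₂` satisfy `χ₂(m') = χ₂(Φ) = 0`,
`χ₂(m) = 1`.  Then there is no group homomorphism `ρ : G → U₄(ℤ/ℓ)` whose three
superdiagonal entry functions are `χ₁, χ₂, χ₃` (so `⟨χ₁,χ₂,χ₃⟩` does not contain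
zero). -/
theorem no_U4_lift (ℓ : ℕ) (hℓ : ℓ.Prime) (h3 : 3 < ℓ)
    (G : Type*) [Group G] (m' m Φ : G)
    (hcomm : m' * m = m * m')
    (hm' : orderOf m' = ℓ) (hm : orderOf m = ℓ) (hΦ : orderOf Φ = ℓ)
    (hc₁ : Φ * m' * Φ⁻¹ = m') (hc₂ : Φ * m * Φ⁻¹ = m' * m)
    (hgen : Subgroup.closure {m', m, Φ} = (⊤ : Subgroup G))
    (hcard : Nat.card G = ℓ ^ 3)
    (χ₁ χ₂ χ₃ : G →* Multiplicative (ZMod ℓ))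
    (hχ₁m' : χ₁ m' = 1) (hχ₁m : χ₁ m = 1)
    (hχ₃m' : χ₃ m' = 1) (hχ₃m : χ₃ m = 1)
    (hφ₁ : Multiplicative.toAdd (χ₁ Φ) ≠ 0) (hφ₃ : Multiplicative.toAdd (χ₃ Φ) ≠ 0)
    (hχ₂m' : χ₂ m' = 1) (hχ₂Φ : χ₂ Φ = 1) (hχ₂m : Multiplicative.toAdd (χ₂ m) = 1) :
    ¬ ∃ ρ : G →* Matrix (Fin 4) (Fin 4) (ZMod ℓ), ∀ g : G, ∃ u v w : ZMod ℓ,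
        ρ g = M4 (Multiplicative.toAdd (χ₁ g)) (Multiplicative.toAdd (χ₂ g))
          (Multiplicative.toAdd (χ₃ g)) u v w := by
  haveI : Fact ℓ.Prime := ⟨hℓ⟩
  rintro ⟨ρ, h⟩
  set φ₁ := Multiplicative.toAdd (χ₁ Φ) with hφ₁def
  set φ₃ := Multiplicative.toAdd (χ₃ Φ) with hφ₃def
  obtain ⟨uB, vB, wB, hB⟩ := h m'
  obtain ⟨uA, vA, wA, hA⟩ := h m
  obtain ⟨uF, vF, wF, hF⟩ := h Φ
  rw [hχ₁m', hχ₂m', hχ₃m'] at hB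
  rw [hχ₁m, hχ₂m, hχ₃m] at hA
  rw [hχ₂Φ] at hF
  simp only [toAdd_one] at hB hA hF
  -- group relations pushed through ρ
  have e1 : Φ * m' = m' * Φ := mul_inv_eq_iff_eq_mul.mp hc₁
  have e2 : Φ * m = m' * m * Φ := mul_inv_eq_iff_eq_mul.mp hc₂
  have hE1 : ρ Φ * ρ m' = ρ m' * ρ Φ := by
    rw [← map_mul, ← map_mul, e1]
  have hE2 : ρ Φ * ρ m = ρ m' * ρ m * ρ Φ := by
    rw [← map_mul, ← map_mul, ← map_mul, e2]
  simp only [hA, hB, hF] at hE1 hE2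
  -- extract entries
  have t1 := congrFun (congrFun hE2 0) 2
  have t2 := congrFun (congrFun hE2 1) 3
  have t3 := congrFun (congrFun hE1 0) 3
  simp only [M4, Matrix.mul_apply, Fin.sum_univ_four, Matrix.cons_val', Matrix.cons_val_zero,
    Matrix.cons_val_one, Matrix.head_cons, Matrix.head_fin_const, Matrix.empty_val',
    Matrix.cons_val_fin_one, Matrix.of_apply, Fin.isValue, Matrix.cons_val_two,
    Matrix.cons_val_three, Matrix.tail_cons] at t1 t2 t3
  -- t1 : uF + uA + φ₁ = uB + uA + uF  (u entries)
  -- t2 : wF + wA = wB + wA + φ₃ + wF  (w entries)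
  -- t3 : relation among v entries; hE1 at (0,3) gives φ₁ * wB = uB * φ₃
  have huB : uB = φ₁ := by linear_combination -t1
  have hwB : wB = -φ₃ := by linear_combination -t2
  have key : φ₁ * wB = uB * φ₃ := by linear_combination t3
  rw [huB, hwB] at key
  have h2 : (2 : ZMod ℓ) * (φ₁ * φ₃) = 0 := by ring_nf; linear_combination -key
  have h2ne : (2 : ZMod ℓ) ≠ 0 := by
    have : ((2 : ℕ) : ZMod ℓ) ≠ 0 := by
      rw [Ne, ZMod.natCast_eq_zero_iff]
      intro hdvd
      have := Nat.le_of_dvd (by norm_num) hdvd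
      omega
    simpa using this
  rcases mul_eq_zero.mp h2 with h | h
  · exact h2ne h
  · rcases mul_eq_zero.mp h with h' | h'
    · exact hφ₁ h'
    · exact hφ₃ h'
end
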